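/- arXiv:1905.12950 — 2 statements merged into one kernel-verified Lean document; each statement's English description precedes it below -/
import Mathlib

section
/- Let K ≥ 1, η ∈ (0, 1/500], γ = 200K², and let ψ(w) = (1/η)Σ_{i=1}^K w(i)ln w(i) + γ Σ_{i=1}^K ln(1/w(i)), whose Hessian is the diagonal matrix ∇²ψ(w) = diag(1/(η w(i)) + γ/w(i)²) with inverse ∇⁻²ψ(w) = diag(η w(i)²/(w(i) + γη)). Given loss vectors c_1,…,c_T ∈ ℝ^K, define the follow-the-regularized-leader iterates w_t = argmin_{w ∈ Δ_K}(Σ_{s<t}⟨w, c_s⟩ + ψ(w)). If ‖c_t‖²_{∇⁻²ψ(w_t)} := Σ_i (η w_t(i)²/(w_t(i) + γη))·c_t(i)² ≤ 1/25, then ‖w_{t+1} − w_t‖_{∇²ψ(w_t)} ≤ 1/2, and consequently 1/2 ≤ w_{t+1}(i)/w_t(i) ≤ 2 for every i ∈ [K]. -/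
noncomputable section

/-- The hybrid entropy-plus-log-barrier regularizer
`ψ(w) = (1/η) Σ_i w(i) ln w(i) + γ Σ_i ln(1/w(i))`. -/
def psiReg (K : ℕ) (η γ : ℝ) (w : Fin K → ℝ) : ℝ :=
  (1 / η) * (∑ i, w i * Real.log (w i)) + γ * ∑ i, Real.log (1 / w i)


def phiF (η γ : ℝ) (u : ℝ) : ℝ := (1/η) * (u * Real.log u) - γ * Real.log u

lemma phi_hasDeriv (η γ μ : ℝ) (u : ℝ) (hu : 0 < u) :
    HasDerivAt (fun v => phiF η γ v - μ/2 * v^2)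
      ((1/η) * (Real.log u + 1) - γ * u⁻¹ - μ/2 * (2*u)) u := by
  have h1 := (Real.hasDerivAt_mul_log hu.ne').const_mul (1/η)
  have h2 := (Real.hasDerivAt_log hu.ne').const_mul γ
  have h3 : HasDerivAt (fun v : ℝ => μ/2 * v^2) (μ/2 * (2*u)) u := by
    have := (hasDerivAt_pow 2 u).const_mul (μ/2)
    simpa [mul_comm] using this
  exact (h1.sub h2).sub h3

lemma phi_hasDeriv2 (η γ μ : ℝ) (u : ℝ) (hu : 0 < u) :
    HasDerivAt (fun v => (1/η) * (Real.log v + 1) - γ * v⁻¹ - μ/2 * (2*v))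
      ((1/η) * u⁻¹ + γ * (u^2)⁻¹ - μ) u := by
  have h1 : HasDerivAt (fun v : ℝ => (1/η) * (Real.log v + 1)) ((1/η) * u⁻¹) u := by
    simpa using ((Real.hasDerivAt_log hu.ne').add_const 1).const_mul (1/η)
  have h2 : HasDerivAt (fun v : ℝ => γ * v⁻¹) (γ * (-(u^2)⁻¹)) u :=
    (hasDerivAt_inv hu.ne').const_mul γ
  have h3 : HasDerivAt (fun v : ℝ => μ/2 * (2*v)) μ u := by
    have e : (fun v : ℝ => μ/2 * (2*v)) = fun v : ℝ => μ * v := by funext v; ring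
    rw [e]; simpa using (hasDerivAt_id u).const_mul μ
  have := (h1.sub h2).sub h3
  exact this.congr_deriv (by ring)

lemma phi_strong (η γ μ B : ℝ) (hη : 0 < η) (hγ : 0 ≤ γ) (hB : 0 < B)
    (hμ : μ ≤ 1/(η*B) + γ/B^2) :
    ConvexOn ℝ (Set.Ioc 0 B) (fun u => phiF η γ u - μ/2 * u^2) := by
  have hint : interior (Set.Ioc (0:ℝ) B) = Set.Ioo 0 B := interior_Ioc
  apply convexOn_of_hasDerivWithinAt2_nonneg (convex_Ioc 0 B)
    (f' := fun u => (1/η) * (Real.log u + 1) - γ * u⁻¹ - μ/2 * (2*u))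
    (f'' := fun u => (1/η) * u⁻¹ + γ * (u^2)⁻¹ - μ)
  · exact fun u hu => (phi_hasDeriv η γ μ u hu.1).continuousAt.continuousWithinAt
  · intro u hu
    rw [hint] at hu
    exact (phi_hasDeriv η γ μ u hu.1).hasDerivWithinAt
  · intro u hu
    rw [hint] at hu
    exact (phi_hasDeriv2 η γ μ u hu.1).hasDerivWithinAt
  · intro u hu
    rw [hint] at hu
    obtain ⟨hu0, huB⟩ := hu
    have key : 1/(η*B) + γ/B^2 ≤ 1/(η*u) + γ/u^2 := by
      gcongr <;> nlinarith
    have e1 : (1/η) * u⁻¹ = 1/(η*u) := by field_simp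
    have e2 : γ * (u^2)⁻¹ = γ/u^2 := by field_simp
    rw [e1, e2]; linarith

lemma phi_interp (η γ μ B p q s : ℝ) (hη : 0 < η) (hγ : 0 ≤ γ) (hB : 0 < B)
    (hμ : μ ≤ 1/(η*B) + γ/B^2) (hp : p ∈ Set.Ioc 0 B) (hq : q ∈ Set.Ioc 0 B)
    (hs0 : 0 ≤ s) (hs1 : s ≤ 1) :
    phiF η γ ((1-s)*p + s*q) ≤
      (1-s) * phiF η γ p + s * phiF η γ q - μ/2 * (s*(1-s)*(q-p)^2) := by
  have h := (phi_strong η γ μ B hη hγ hB hμ).2 hp hq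
    (show (0:ℝ) ≤ 1-s by linarith) hs0 (show (1-s)+s = (1:ℝ) by ring)
  simp only [smul_eq_mul] at h
  nlinarith [h]

lemma psiReg_eq_sum (K : ℕ) (η γ : ℝ) (w : Fin K → ℝ) :
    psiReg K η γ w = ∑ i, phiF η γ (w i) := by
  rw [psiReg, Finset.mul_sum, Finset.mul_sum, ← Finset.sum_add_distrib]
  refine Finset.sum_congr rfl fun i _ => ?_
  rw [one_div (w i), Real.log_inv, phiF]
  ring

set_option maxHeartbeats 1000000 in
/-- Core stability estimate with abstract cumulative losses. -/
lemma stab_aux (K : ℕ) (η γ : ℝ) (hη0 : 0 < η) (hγ200 : (200:ℝ) ≤ γ)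
    (L cc : Fin K → ℝ) (x y : Fin K → ℝ)
    (hx_pos : ∀ i, 0 < x i) (hx_sum : (∑ i, x i) = 1)
    (hy_pos : ∀ i, 0 < y i) (hy_sum : (∑ i, y i) = 1)
    (hx_min : ∀ v : Fin K → ℝ, (∀ i, 0 < v i) → (∑ i, v i) = 1 →
      (∑ i, x i * L i) + psiReg K η γ x ≤ (∑ i, v i * L i) + psiReg K η γ v)
    (hy_min : ∀ v : Fin K → ℝ, (∀ i, 0 < v i) → (∑ i, v i) = 1 →
      (∑ i, y i * (L i + cc i)) + psiReg K η γ y ≤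
        (∑ i, v i * (L i + cc i)) + psiReg K η γ v)
    (hsmall : (∑ i, (η * (x i) ^ 2 / (x i + γ * η)) * (cc i) ^ 2) ≤ 1 / 25) :
    (∑ i, (1 / (η * x i) + γ / (x i)^2) * (y i - x i)^2) ≤ 1/4 := by
  have hγpos : (0:ℝ) < γ := by linarith
  have hx1 : ∀ i, x i ≤ 1 := fun i => hx_sum ▸
    Finset.single_le_sum (fun j _ => (hx_pos j).le) (Finset.mem_univ i)
  have hy1 : ∀ i, y i ≤ 1 := fun i => hy_sum ▸
    Finset.single_le_sum (fun j _ => (hy_pos j).le) (Finset.mem_univ i)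
  set H : Fin K → ℝ := fun i => 1 / (η * x i) + γ / (x i)^2 with hHdef
  have hHpos : ∀ i, 0 < H i := by
    intro i
    have := hx_pos i
    positivity
  by_contra hcon
  push_neg at hcon
  set S : ℝ := ∑ i, H i * (y i - x i) ^ 2 with hSdef
  have hS0 : (0:ℝ) < S := by linarith
  set σ : ℝ := Real.sqrt S with hσdef
  have hσsq : σ^2 = S := Real.sq_sqrt hS0.le
  have hσhalf : 1/2 < σ := by
    rw [hσdef]
    exact (Real.lt_sqrt (by norm_num)).mpr (by nlinarith)
  have hσpos : 0 < σ := by linarith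
  have hσne : σ ≠ 0 := ne_of_gt hσpos
  set lam : ℝ := 1 / (2*σ) with hlam
  have hlam_pos : 0 < lam := by positivity
  have hlam_lt1 : lam < 1 := by
    rw [hlam, div_lt_one (by linarith)]
    linarith
  set e : Fin K → ℝ := fun i => lam * (y i - x i) with hedef
  set z : Fin K → ℝ := fun i => x i + e i with hzdef
  have hNe : (∑ i, H i * (e i)^2) = 1/4 := by
    have h1 : ∀ i, H i * (e i)^2 = lam^2 * (H i * (y i - x i)^2) := by
      intro i; rw [hedef]; ring
    rw [Finset.sum_congr rfl fun i _ => h1 i, ← Finset.mul_sum, ← hSdef, hlam, ← hσsq]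
    field_simp
    ring
  have hterm_le : ∀ i, H i * (e i)^2 ≤ 1/4 := by
    intro i
    rw [← hNe]
    exact Finset.single_le_sum
      (fun j _ => mul_nonneg (hHpos j).le (sq_nonneg _)) (Finset.mem_univ i)
  have hcoord : ∀ i, 28 * |e i| ≤ x i := by
    intro i
    have hx := hx_pos i
    have h1 : γ / (x i)^2 * (e i)^2 ≤ 1/4 := by
      have h2 : 0 ≤ 1/(η * x i) * (e i)^2 := by positivity
      have h3 := hterm_le i
      rw [hHdef] at h3
      nlinarith
    have h3 : γ * (e i)^2 ≤ (x i)^2 / 4 := by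
      rw [div_mul_eq_mul_div, div_le_iff₀ (by positivity)] at h1
      linarith
    have h4 : (28 * |e i|)^2 ≤ (x i)^2 := by
      rw [mul_pow, sq_abs]
      nlinarith [mul_nonneg (show (0:ℝ) ≤ γ - 200 by linarith) (sq_nonneg (e i))]
    have h5 : 0 ≤ 28 * |e i| := by positivity
    nlinarith [h4, h5, hx]
  have he_lb : ∀ i, -(x i / 28) ≤ e i := fun i => by
    have := hcoord i; have := neg_abs_le (e i); linarith
  have he_ub : ∀ i, e i ≤ x i / 28 := fun i => by
    have := hcoord i; have := le_abs_self (e i); linarith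
  have hz_pos : ∀ i, 0 < z i := by
    intro i
    have h1 := he_lb i
    have h2 := hx_pos i
    rw [hzdef]; simp only; linarith
  have hz_ub : ∀ i, z i ≤ 29/28 * x i := by
    intro i
    have h1 := he_ub i
    rw [hzdef]; simp only; linarith
  have hsum_e : (∑ i, e i) = 0 := by
    rw [hedef]
    simp only
    rw [← Finset.mul_sum, Finset.sum_sub_distrib, hx_sum, hy_sum]
    ring
  have hz_sum : (∑ i, z i) = 1 := by
    rw [hzdef]; simp only
    rw [Finset.sum_add_distrib, hx_sum, hsum_e]
    norm_num
  have hmu_sum : (∑ i, (784/841 * H i) * (e i)^2) = 196/841 := by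
    have h1 : ∀ i, (784/841 * H i) * (e i)^2 = 784/841 * (H i * (e i)^2) := by
      intro i; ring
    rw [Finset.sum_congr rfl fun i _ => h1 i, ← Finset.mul_sum, hNe]
    norm_num
  -- LOWER bound via strong convexity at x
  have hlow : ((∑ i, x i * L i) + psiReg K η γ x) + 98/841 ≤
      (∑ i, z i * L i) + psiReg K η γ z := by
    apply _root_.le_of_forall_pos_le_add
    intro ε hε
    set s : ℝ := min (1/2) (8*ε) with hsdef
    have hs0 : 0 < s := by positivity
    have hs1 : s ≤ 1/2 := min_le_left _ _
    have hs2 : s ≤ 8*ε := min_le_right _ _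
    set m : Fin K → ℝ := fun i => x i + s * e i with hmdef
    have hm_pos : ∀ i, 0 < m i := by
      intro i
      have h1 := he_lb i
      have h2 := he_ub i
      have h3 := hx_pos i
      rw [hmdef]; simp only
      nlinarith
    have hm_sum : (∑ i, m i) = 1 := by
      rw [hmdef]; simp only
      rw [Finset.sum_add_distrib, ← Finset.mul_sum, hsum_e, hx_sum]
      ring
    have hmin := hx_min m hm_pos hm_sum
    have hinterp : ∀ i, phiF η γ (m i) ≤ (1-s) * phiF η γ (x i) + s * phiF η γ (z i)
        - (784/841 * H i)/2 * (s*(1-s)*(e i)^2) := by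
      intro i
      have hx := hx_pos i
      have hB : (0:ℝ) < 29/28 * x i := by linarith
      have hμB : 784/841 * H i ≤ 1/(η*(29/28 * x i)) + γ/(29/28 * x i)^2 := by
        have e1 : 1/(η*(29/28 * x i)) = (28/29) * (1/(η * x i)) := by
          field_simp
        have e2 : γ/(29/28 * x i)^2 = (784/841) * (γ/(x i)^2) := by
          field_simp
          ring
        rw [e1, e2, hHdef]
        have h0 : 0 ≤ 1/(η * x i) := by positivity
        nlinarith
      have hp : x i ∈ Set.Ioc 0 (29/28 * x i) := ⟨hx, by linarith⟩
      have hq : z i ∈ Set.Ioc 0 (29/28 * x i) := ⟨hz_pos i, hz_ub i⟩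
      have h := phi_interp η γ (784/841 * H i) (29/28 * x i) (x i) (z i) s
        hη0 hγpos.le hB hμB hp hq hs0.le (by linarith)
      have hcomb : (1-s) * x i + s * z i = m i := by
        rw [hmdef, hzdef]; simp only; ring
      have hze : z i - x i = e i := by rw [hzdef]; simp only; ring
      rw [hcomb, hze] at h
      exact h
    have hpsi_m : psiReg K η γ m ≤ (1-s) * psiReg K η γ x + s * psiReg K η γ z
        - s*(1-s)/2 * (196/841) := by
      rw [psiReg_eq_sum, psiReg_eq_sum, psiReg_eq_sum]
      have h1 : (∑ i, phiF η γ (m i)) ≤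
          ∑ i, ((1-s) * phiF η γ (x i) + s * phiF η γ (z i)
            - (784/841 * H i)/2 * (s*(1-s)*(e i)^2)) :=
        Finset.sum_le_sum fun i _ => hinterp i
      have h2 : ∑ i, ((1-s) * phiF η γ (x i) + s * phiF η γ (z i)
            - (784/841 * H i)/2 * (s*(1-s)*(e i)^2))
          = ∑ i, ((1-s) * phiF η γ (x i) + s * phiF η γ (z i))
            - ∑ i, (s*(1-s)/2 * ((784/841 * H i) * (e i)^2)) := by
        rw [← Finset.sum_sub_distrib]
        refine Finset.sum_congr rfl fun i _ => ?_
        ring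
      have h3 : ∑ i, ((1-s) * phiF η γ (x i) + s * phiF η γ (z i))
          = (1-s) * (∑ i, phiF η γ (x i)) + s * (∑ i, phiF η γ (z i)) := by
        rw [Finset.mul_sum, Finset.mul_sum, ← Finset.sum_add_distrib]
      have h4 : ∑ i, (s*(1-s)/2 * ((784/841 * H i) * (e i)^2))
          = s*(1-s)/2 * (196/841) := by
        rw [← Finset.mul_sum, hmu_sum]
      rw [h2, h3, h4] at h1
      linarith
    have hlin_m : (∑ i, m i * L i)
        = (1-s) * (∑ i, x i * L i) + s * (∑ i, z i * L i) := by
      rw [Finset.mul_sum, Finset.mul_sum, ← Finset.sum_add_distrib]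
      refine Finset.sum_congr rfl fun i _ => ?_
      rw [hmdef, hzdef]; simp only; ring
    -- combine and divide by s
    have hdiv : s * ((∑ i, x i * L i) + psiReg K η γ x) ≤
        s * (((∑ i, z i * L i) + psiReg K η γ z) - (1-s) * (98/841)) := by
      nlinarith [hmin, hpsi_m, hlin_m]
    have hd2 := le_of_mul_le_mul_left hdiv hs0
    have hs3 : s * (98/841) ≤ ε := by nlinarith
    linarith
  -- UPPER bound via convexity and minimality of y
  have hupper : (∑ i, z i * (L i + cc i)) + psiReg K η γ z ≤
      (∑ i, x i * (L i + cc i)) + psiReg K η γ x := by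
    have hymin := hy_min x hx_pos hx_sum
    have hconv : ∀ i, phiF η γ (z i) ≤ (1-lam) * phiF η γ (x i) + lam * phiF η γ (y i) := by
      intro i
      have h := phi_interp η γ 0 1 (x i) (y i) lam hη0 hγpos.le one_pos
        (by positivity) ⟨hx_pos i, hx1 i⟩ ⟨hy_pos i, hy1 i⟩ hlam_pos.le hlam_lt1.le
      have hc : (1-lam)*x i + lam*y i = z i := by
        rw [hzdef, hedef]; simp only; ring
      rw [hc] at h
      nlinarith [h]
    have hpsi_z : psiReg K η γ z ≤ (1-lam) * psiReg K η γ x + lam * psiReg K η γ y := by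
      rw [psiReg_eq_sum, psiReg_eq_sum, psiReg_eq_sum]
      calc (∑ i, phiF η γ (z i))
          ≤ ∑ i, ((1-lam) * phiF η γ (x i) + lam * phiF η γ (y i)) :=
            Finset.sum_le_sum fun i _ => hconv i
        _ = (1-lam) * (∑ i, phiF η γ (x i)) + lam * (∑ i, phiF η γ (y i)) := by
            rw [Finset.mul_sum, Finset.mul_sum, ← Finset.sum_add_distrib]
    have hlin_z : (∑ i, z i * (L i + cc i))
        = (1-lam) * (∑ i, x i * (L i + cc i)) + lam * (∑ i, y i * (L i + cc i)) := by
      rw [Finset.mul_sum, Finset.mul_sum, ← Finset.sum_add_distrib]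
      refine Finset.sum_congr rfl fun i _ => ?_
      rw [hzdef, hedef]; simp only; ring
    nlinarith [hymin, hpsi_z, hlin_z]
  -- combine the two bounds
  have hsplit : ∀ v : Fin K → ℝ, (∑ i, v i * (L i + cc i))
      = (∑ i, v i * L i) + (∑ i, v i * cc i) := by
    intro v
    rw [← Finset.sum_add_distrib]
    refine Finset.sum_congr rfl fun i _ => ?_
    ring
  have hkey : 98/841 ≤ ∑ i, (-(e i)) * cc i := by
    have h1 := hlow
    have h2 := hupper
    rw [hsplit z, hsplit x] at h2
    have h3 : (∑ i, x i * cc i) - (∑ i, z i * cc i) = ∑ i, (-(e i)) * cc i := by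
      rw [← Finset.sum_sub_distrib]
      refine Finset.sum_congr rfl fun i _ => ?_
      rw [hzdef]; simp only; ring
    linarith
  -- Cauchy–Schwarz
  have hcs := Finset.sum_mul_sq_le_sq_mul_sq Finset.univ
    (fun i => Real.sqrt (H i) * (-(e i))) (fun i => cc i / Real.sqrt (H i))
  have hfg : ∀ i : Fin K, (Real.sqrt (H i) * (-(e i))) * (cc i / Real.sqrt (H i))
      = (-(e i)) * cc i := by
    intro i
    have hs : Real.sqrt (H i) ≠ 0 := ne_of_gt (Real.sqrt_pos.mpr (hHpos i))
    field_simp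
  have hf2 : ∀ i : Fin K, (Real.sqrt (H i) * (-(e i)))^2 = H i * (e i)^2 := by
    intro i
    rw [mul_pow, Real.sq_sqrt (hHpos i).le]
    ring
  have hg2 : ∀ i : Fin K, (cc i / Real.sqrt (H i))^2
      = (η * (x i)^2 / (x i + γ * η)) * (cc i)^2 := by
    intro i
    have hx := hx_pos i
    have hden : 0 < x i + γ * η := by positivity
    have hH : H i = (x i + γ*η)/(η * (x i)^2) := by
      rw [hHdef]; simp only; field_simp
    rw [div_pow, Real.sq_sqrt (hHpos i).le, hH, div_div_eq_mul_div]
    ring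
  rw [Finset.sum_congr rfl fun i _ => hfg i,
    Finset.sum_congr rfl fun i _ => hf2 i,
    Finset.sum_congr rfl fun i _ => hg2 i, hNe] at hcs
  have hdual_nonneg : 0 ≤ ∑ i, (η * (x i)^2 / (x i + γ * η)) * (cc i)^2 := by
    apply Finset.sum_nonneg
    intro i _
    have hx := hx_pos i
    positivity
  have hcs2 : (∑ i, (-(e i)) * cc i)^2 ≤ 1/100 := by
    calc (∑ i, (-(e i)) * cc i)^2 ≤ 1/4 * ∑ i, (η * (x i)^2 / (x i + γ * η)) * (cc i)^2 := hcs
      _ ≤ 1/4 * (1/25) := by linarith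
      _ = 1/100 := by norm_num
  nlinarith [hkey, hcs2]


set_option maxHeartbeats 1000000 in
/-- stability step in the proof of Lemma 3.
For FTRL with the regularizer `ψ` (with `η ≤ 1/500` and `γ = 200K²`), if the dual
local norm of the current loss satisfies
`‖c_t‖²_{∇⁻²ψ(w_t)} = Σ_i (η w_t(i)²/(w_t(i)+γη)) c_t(i)² ≤ 1/25`, then
`‖w_{t+1} - w_t‖_{∇²ψ(w_t)} ≤ 1/2`, and consequently
`1/2 ≤ w_{t+1}(i)/w_t(i) ≤ 2` for every `i`. -/
theorem stmt_18 (K : ℕ) (hK : 1 ≤ K)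
    (η γ : ℝ) (hη0 : 0 < η) (hη : η ≤ 1 / 500) (hγ : γ = 200 * (K : ℝ) ^ 2)
    (c : ℕ → Fin K → ℝ) (w : ℕ → Fin K → ℝ) (t : ℕ) (ht : 1 ≤ t)
    -- w_t = argmin_{w ∈ Δ_K} (Σ_{s < t} ⟨w, c_s⟩ + ψ(w))
    (hwt : (∀ i, 0 < w t i) ∧ (∑ i, w t i) = 1 ∧
      ∀ v : Fin K → ℝ, (∀ i, 0 < v i) → (∑ i, v i) = 1 →
        (∑ i, w t i * ∑ s ∈ Finset.Icc 1 (t - 1), c s i) + psiReg K η γ (w t) ≤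
          (∑ i, v i * ∑ s ∈ Finset.Icc 1 (t - 1), c s i) + psiReg K η γ v)
    -- w_{t+1} = argmin_{w ∈ Δ_K} (Σ_{s ≤ t} ⟨w, c_s⟩ + ψ(w))
    (hwt1 : (∀ i, 0 < w (t + 1) i) ∧ (∑ i, w (t + 1) i) = 1 ∧
      ∀ v : Fin K → ℝ, (∀ i, 0 < v i) → (∑ i, v i) = 1 →
        (∑ i, w (t + 1) i * ∑ s ∈ Finset.Icc 1 t, c s i) + psiReg K η γ (w (t + 1)) ≤
          (∑ i, v i * ∑ s ∈ Finset.Icc 1 t, c s i) + psiReg K η γ v)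
    -- small dual local norm of the current loss
    (hsmall : (∑ i, (η * (w t i) ^ 2 / (w t i + γ * η)) * (c t i) ^ 2) ≤ 1 / 25) :
    Real.sqrt (∑ i, (1 / (η * w t i) + γ / (w t i) ^ 2) *
        (w (t + 1) i - w t i) ^ 2) ≤ 1 / 2 ∧
      ∀ i, 1 / 2 ≤ w (t + 1) i / w t i ∧ w (t + 1) i / w t i ≤ 2 := by
  obtain ⟨hx_pos, hx_sum, hx_min⟩ := hwt
  obtain ⟨hy_pos, hy_sum, hy_min⟩ := hwt1
  have hγ200 : (200:ℝ) ≤ γ := by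
    have h1 : (1:ℝ) ≤ (K:ℝ) := by exact_mod_cast hK
    rw [hγ]; nlinarith
  have hIcc : Finset.Icc 1 t = insert t (Finset.Icc 1 (t-1)) := by
    ext k; simp only [Finset.mem_Icc, Finset.mem_insert]; omega
  have hL1 : ∀ i, (∑ s ∈ Finset.Icc 1 t, c s i)
      = (∑ s ∈ Finset.Icc 1 (t-1), c s i) + c t i := by
    intro i
    rw [hIcc, Finset.sum_insert (by simp only [Finset.mem_Icc]; omega)]
    ring
  have hy_min' : ∀ v : Fin K → ℝ, (∀ i, 0 < v i) → (∑ i, v i) = 1 →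
      (∑ i, w (t+1) i * ((∑ s ∈ Finset.Icc 1 (t-1), c s i) + c t i))
          + psiReg K η γ (w (t+1)) ≤
        (∑ i, v i * ((∑ s ∈ Finset.Icc 1 (t-1), c s i) + c t i)) + psiReg K η γ v := by
    intro v hv hv1
    have h := hy_min v hv hv1
    have e1 : ∀ u : Fin K → ℝ, (∑ i, u i * ∑ s ∈ Finset.Icc 1 t, c s i)
        = ∑ i, u i * ((∑ s ∈ Finset.Icc 1 (t-1), c s i) + c t i) :=
      fun u => Finset.sum_congr rfl fun i _ => by rw [hL1 i]
    rw [e1 v, e1 (w (t+1))] at h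
    exact h
  have hS := stab_aux K η γ hη0 hγ200 (fun i => ∑ s ∈ Finset.Icc 1 (t-1), c s i) (c t)
    (w t) (w (t+1)) hx_pos hx_sum hy_pos hy_sum hx_min hy_min' hsmall
  constructor
  · have h2 : Real.sqrt (∑ i, (1 / (η * w t i) + γ / (w t i)^2) * (w (t+1) i - w t i)^2)
        ≤ Real.sqrt (1/4) := Real.sqrt_le_sqrt hS
    rw [show (1/4:ℝ) = (1/2)^2 by norm_num,
      Real.sqrt_sq (by norm_num : (0:ℝ) ≤ 1/2)] at h2
    exact h2
  · intro i
    have hx := hx_pos i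
    have hterm : (1 / (η * w t i) + γ / (w t i)^2) * (w (t+1) i - w t i)^2 ≤ 1/4 := by
      refine le_trans (Finset.single_le_sum
        (f := fun j => (1 / (η * w t j) + γ / (w t j)^2) * (w (t+1) j - w t j)^2)
        (fun j _ => ?_) (Finset.mem_univ i)) hS
      have := hx_pos j
      positivity
    have h1 : γ / (w t i)^2 * (w (t+1) i - w t i)^2 ≤ 1/4 := by
      have h2 : 0 ≤ 1/(η * w t i) * (w (t+1) i - w t i)^2 := by positivity
      nlinarith
    have h3 : γ * (w (t+1) i - w t i)^2 ≤ (w t i)^2/4 := by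
      rw [div_mul_eq_mul_div, div_le_iff₀ (by positivity)] at h1
      linarith
    have h4 : (2*(w (t+1) i - w t i))^2 ≤ (w t i)^2 := by
      nlinarith [mul_nonneg (show (0:ℝ) ≤ γ - 200 by linarith)
        (sq_nonneg (w (t+1) i - w t i))]
    constructor
    · rw [le_div_iff₀ hx]
      nlinarith [sq_nonneg (2*(w (t+1) i - w t i) + w t i)]
    · rw [div_le_iff₀ hx]
      nlinarith [sq_nonneg (2*(w (t+1) i - w t i) - w t i)]


end
end

section
/- Fix K, T ≥ 2, S ∈ [T], n ≥ 1. Let ℓ_1,…,ℓ_T ∈ [−1,1]^K, let w_1,…,w_T ∈ Δ_K and z_t(i) ∈ [0,1] with Σ_j z_t(j)w_t(j) > 0, and define p_t(i) = z_t(i)w_t(i)/Σ_j z_t(j)w_t(j), r_t(i) = ⟨p_t, ℓ_t⟩ − ℓ_t(i), c_t(i) = −z_t(i)r_t(i). Assume a constant C > 0 such that: (a) Σ_{t=1}^T ⟨w_t, c_t⟩ − Σ_{t=1}^T c_t(i) ≤ C√(T ln K) for every i ∈ [K]; and (b) for every i ∈ [K], every S' ∈ [T], and every b_1,…,b_T ∈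 {0,1} with at most S'−1 switches, the sequence q_t = (1 − z_t(i), z_t(i)) with losses h_t = (0, −r_t(i)) satisfies Σ_t ⟨q_t, h_t⟩ − Σ_t h_t(b_t) ≤ C√(T S' ln T). Then there is a constant C' depending only on C such that for every benchmark sequence i_1,…,i_T ∈ [K] with at most S−1 switches and at most n distinct actions, Σ_{t=1}^T r_t(i_t) ≤ C'·√(T(nS ln T + n² ln K)). -/
open Finset


lemma nat_Icc_insert (a b : ℕ) (h : a ≤ b + 1) :
    Finset.Icc a (b+1) = insert (b+1) (Finset.Icc a b) := by
  ext x; simp only [Finset.mem_Icc, Finset.mem_insert]; omega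

lemma aux_card {K : ℕ} (idx : ℕ → Fin K) :
    ∀ T : ℕ, 1 ≤ T →
    ((Finset.Icc 1 T).image idx).card ≤
      1 + ∑ t ∈ Finset.Icc 2 T, (if idx t = idx (t-1) then 0 else 1) := by
  intro T
  induction T with
  | zero => omega
  | succ T ih =>
    intro _
    rcases Nat.eq_zero_or_pos T with h1 | h1
    · subst h1; simp
    · have h2 : Finset.Icc 1 (T+1) = insert (T+1) (Finset.Icc 1 T) :=
        nat_Icc_insert 1 T (by omega)
      have h3 : Finset.Icc 2 (T+1) = insert (T+1) (Finset.Icc 2 T) :=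
        nat_Icc_insert 2 T (by omega)
      have hmem : (T+1) ∉ Finset.Icc 2 T := by simp
      rw [h2, h3, Finset.image_insert, Finset.sum_insert hmem]
      have ih' := ih h1
      by_cases hcase : idx (T+1) = idx T
      · have hin : idx (T+1) ∈ (Finset.Icc 1 T).image idx := by
          rw [hcase]; exact Finset.mem_image_of_mem idx (by simp only [Finset.mem_Icc]; omega)
        rw [Finset.card_insert_of_mem hin]
        simp only [Nat.add_sub_cancel, if_pos hcase]
        omega
      · have := Finset.card_insert_le (idx (T+1)) ((Finset.Icc 1 T).image idx)
        simp only [Nat.add_sub_cancel, if_neg hcase]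
        omega

lemma aux_sum_sqrt {α : Type*} (s : Finset α) (f : α → ℝ) (hf : ∀ i ∈ s, 0 ≤ f i) :
    ∑ i ∈ s, Real.sqrt (f i) ≤ Real.sqrt ((s.card : ℝ) * ∑ i ∈ s, f i) := by
  have h := Finset.sum_mul_sq_le_sq_mul_sq s (fun _ => (1:ℝ)) (fun i => Real.sqrt (f i))
  simp only [one_mul, one_pow, Finset.sum_const, nsmul_eq_mul, mul_one] at h
  have h2 : ∑ i ∈ s, Real.sqrt (f i) ^ 2 = ∑ i ∈ s, f i :=
    Finset.sum_congr rfl fun i hi => Real.sq_sqrt (hf i hi)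
  rw [h2] at h
  have h3 : 0 ≤ ∑ i ∈ s, Real.sqrt (f i) :=
    Finset.sum_nonneg fun i _ => Real.sqrt_nonneg _
  calc ∑ i ∈ s, Real.sqrt (f i) = Real.sqrt ((∑ i ∈ s, Real.sqrt (f i))^2) :=
        (Real.sqrt_sq h3).symm
    _ ≤ Real.sqrt ((s.card : ℝ) * ∑ i ∈ s, f i) := Real.sqrt_le_sqrt h

/-- Appendix B.2: a weaker long-term-memory bound from
worst-case sub-routine guarantees.  If in the reduction (Algorithm 1 with `η = 0`,
i.e. losses `h_t = (0, -r_t(i))` for the sub-routines) the algorithm `𝒜` only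
satisfies the worst-case static regret bound `C √(T ln K)` and each `𝒜ᵢ` only
satisfies the worst-case switching regret bound `C √(T S' ln T)`, then the
switching regret against any benchmark with at most `S-1` switches and at most `n`
distinct actions is at most `C' √(T (n S ln T + n² ln K))` for a constant `C'`
depending only on `C`. -/
theorem stmt_19 (C : ℝ) (hC : 0 < C) :
    ∃ C' : ℝ, 0 < C' ∧
      ∀ (K T S n : ℕ), 2 ≤ K → 2 ≤ T → 1 ≤ S → S ≤ T → 1 ≤ n →
      ∀ ℓ w z p r c : ℕ → Fin K → ℝ,
        (∀ t ∈ Finset.Icc 1 T, ∀ i, |ℓ t i| ≤ 1) →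
        (∀ t ∈ Finset.Icc 1 T, (∀ i, 0 ≤ w t i) ∧ (∑ i, w t i) = 1) →
        (∀ t ∈ Finset.Icc 1 T, ∀ i, 0 ≤ z t i ∧ z t i ≤ 1) →
        (∀ t ∈ Finset.Icc 1 T, 0 < ∑ j, z t j * w t j) →
        (∀ t ∈ Finset.Icc 1 T, ∀ i, p t i = z t i * w t i / ∑ j, z t j * w t j) →
        (∀ t ∈ Finset.Icc 1 T, ∀ i, r t i = (∑ j, p t j * ℓ t j) - ℓ t i) →
        (∀ t ∈ Finset.Icc 1 T, ∀ i, c t i = -(z t i * r t i)) →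
        -- (a) worst-case static regret of 𝒜 on the losses c
        (∀ i : Fin K,
          (∑ t ∈ Finset.Icc 1 T, ∑ j, w t j * c t j) -
              (∑ t ∈ Finset.Icc 1 T, c t i) ≤
            C * Real.sqrt ((T : ℝ) * Real.log K)) →
        -- (b) worst-case switching regret of each 𝒜ᵢ on the losses h_t = (0, -r_t(i))
        (∀ i : Fin K, ∀ S' : ℕ, 1 ≤ S' → S' ≤ T → ∀ b : ℕ → Bool,
          (∑ t ∈ Finset.Icc 2 T, if b t = b (t - 1) then 0 else 1) ≤ S' - 1 →
          (∑ t ∈ Finset.Icc 1 T, ((1 - z t i) * 0 + z t i * (-(r t i)))) -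
              (∑ t ∈ Finset.Icc 1 T, if b t then -(r t i) else 0) ≤
            C * Real.sqrt ((T : ℝ) * (S' : ℝ) * Real.log T)) →
        ∀ idx : ℕ → Fin K,
          (∑ t ∈ Finset.Icc 2 T, if idx t = idx (t - 1) then 0 else 1) ≤ S - 1 →
          ((Finset.Icc 1 T).image idx).card ≤ n →
          (∑ t ∈ Finset.Icc 1 T, r t (idx t)) ≤
            C' * Real.sqrt ((T : ℝ) *
              ((n : ℝ) * (S : ℝ) * Real.log T +
                (n : ℝ) ^ 2 * Real.log K)) := by
  refine ⟨3 * C, by positivity, ?_⟩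
  intro K T S n hK hT hS1 hST hn ℓ w z p r c hℓ hw hz hW hp hr hc ha hb idx hsw hcard
  have hlogT : 0 < Real.log T := Real.log_pos (by exact_mod_cast hT)
  have hlogK : 0 < Real.log K := Real.log_pos (by exact_mod_cast hK)
  set A := (Finset.Icc 1 T).image idx with hA
  set L := Real.sqrt ((T : ℝ) * Real.log K) with hL
  have hLnn : 0 ≤ L := Real.sqrt_nonneg _
  -- Step 1: the inner product ⟨w_t, c_t⟩ vanishes
  have hzero : ∀ t ∈ Finset.Icc 1 T, ∑ j, w t j * c t j = 0 := by
    intro t ht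
    have hWt := hW t ht
    have hWne : (∑ j, z t j * w t j) ≠ 0 := ne_of_gt hWt
    have hP : (∑ k, p t k * ℓ t k)
        = (∑ k, z t k * w t k * ℓ t k) / (∑ j, z t j * w t j) := by
      rw [Finset.sum_div]
      exact Finset.sum_congr rfl fun k _ => by rw [hp t ht k]; ring
    have e : ∑ j, w t j * c t j
        = ∑ j, (z t j * w t j * ℓ t j - z t j * w t j * (∑ k, p t k * ℓ t k)) := by
      refine Finset.sum_congr rfl fun j _ => ?_
      rw [hc t ht j, hr t ht j]; ring
    rw [e, Finset.sum_sub_distrib, ← Finset.sum_mul, hP, mul_div_cancel₀ _ hWne, sub_self]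
  -- Step 2: from (a), ∑_t z_t(i) r_t(i) ≤ C L
  have hzr : ∀ i : Fin K, ∑ t ∈ Finset.Icc 1 T, z t i * r t i ≤ C * L := by
    intro i
    have ha' := ha i
    have hsum0 : ∑ t ∈ Finset.Icc 1 T, ∑ j, w t j * c t j = 0 := by
      rw [Finset.sum_congr rfl hzero, Finset.sum_const, smul_zero]
    have hci : ∑ t ∈ Finset.Icc 1 T, c t i
        = -∑ t ∈ Finset.Icc 1 T, z t i * r t i := by
      rw [← Finset.sum_neg_distrib]
      exact Finset.sum_congr rfl fun t ht => by rw [hc t ht i]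
    rw [hsum0, hci] at ha'
    linarith
  -- switch counts of the indicator sequences
  set m : Fin K → ℕ := fun i =>
    ∑ t ∈ Finset.Icc 2 T,
      (if (decide (idx t = i)) = (decide (idx (t-1) = i)) then 0 else 1) with hm
  have hmle : ∀ i, m i + 1 ≤ T := by
    intro i
    have h1 : m i ≤ (Finset.Icc 2 T).card := by
      rw [hm]
      calc ∑ t ∈ Finset.Icc 2 T,
            (if (decide (idx t = i)) = (decide (idx (t-1) = i)) then 0 else 1)
          ≤ ∑ _t ∈ Finset.Icc 2 T, 1 := Finset.sum_le_sum (fun t _ => by split <;> omega)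
        _ = (Finset.Icc 2 T).card := by rw [Finset.sum_const, smul_eq_mul, mul_one]
    rw [Nat.card_Icc] at h1
    omega
  -- Step 3: from (b), the per-action regret bound
  have key : ∀ i : Fin K,
      (∑ t ∈ Finset.Icc 1 T, (if idx t = i then r t i else 0))
        ≤ C * L + C * Real.sqrt ((T : ℝ) * ((m i + 1 : ℕ) : ℝ) * Real.log T) := by
    intro i
    have hb' := hb i (m i + 1) (by omega) (hmle i) (fun t => decide (idx t = i))
      (by simp [hm])
    have e1 : (∑ t ∈ Finset.Icc 1 T, ((1 - z t i) * 0 + z t i * (-(r t i))))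
        = -∑ t ∈ Finset.Icc 1 T, z t i * r t i := by
      rw [← Finset.sum_neg_distrib]
      exact Finset.sum_congr rfl fun t _ => by ring
    have e2 : (∑ t ∈ Finset.Icc 1 T,
          if (decide (idx t = i) : Bool) then -(r t i) else 0)
        = -∑ t ∈ Finset.Icc 1 T, (if idx t = i then r t i else 0) := by
      rw [← Finset.sum_neg_distrib]
      refine Finset.sum_congr rfl fun t _ => ?_
      by_cases h : idx t = i <;> simp [h]
    rw [e1, e2] at hb'
    have := hzr i
    linarith
  -- Step 4: decompose the total regret as a sum over the actions used
  have hdecomp : ∑ t ∈ Finset.Icc 1 T, r t (idx t)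
      = ∑ i ∈ A, ∑ t ∈ Finset.Icc 1 T, (if idx t = i then r t i else 0) := by
    rw [Finset.sum_comm]
    refine Finset.sum_congr rfl fun t ht => ?_
    rw [Finset.sum_ite_eq A (idx t) (fun i => r t i),
      if_pos (Finset.mem_image_of_mem idx ht)]
  -- Step 5: combinatorics on switch counts
  have hswitch : ∑ i ∈ A, m i ≤ 2 * (S - 1) := by
    have hcomm : ∑ i ∈ A, m i = ∑ t ∈ Finset.Icc 2 T, ∑ i ∈ A,
        (if (decide (idx t = i)) = (decide (idx (t-1) = i)) then 0 else 1) := by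
      rw [hm]; exact Finset.sum_comm
    rw [hcomm]
    calc ∑ t ∈ Finset.Icc 2 T, ∑ i ∈ A,
          (if (decide (idx t = i)) = (decide (idx (t-1) = i)) then 0 else 1)
        ≤ ∑ t ∈ Finset.Icc 2 T, 2 * (if idx t = idx (t-1) then 0 else 1) := by
          refine Finset.sum_le_sum fun t _ => ?_
          by_cases h : idx t = idx (t-1)
          · rw [if_pos h, Nat.mul_zero, Nat.le_zero]
            refine Finset.sum_eq_zero fun i _ => ?_
            rw [if_pos (by rw [h])]
          · rw [if_neg h, Nat.mul_one]
            calc ∑ i ∈ A,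
                  (if (decide (idx t = i)) = (decide (idx (t-1) = i)) then 0 else 1)
                ≤ ∑ i ∈ A, ((if i = idx t then 1 else 0)
                    + (if i = idx (t-1) then 1 else 0)) := by
                  refine Finset.sum_le_sum fun i _ => ?_
                  split
                  · exact Nat.zero_le _
                  · rename_i hne
                    have hor : i = idx t ∨ i = idx (t-1) := by
                      by_contra hcon
                      push_neg at hcon
                      apply hne
                      rw [decide_eq_decide]
                      constructor
                      · intro hh; exact absurd hh.symm hcon.1
                      · intro hh; exact absurd hh.symm hcon.2
                    rcases hor with h' | h'
                    · rw [if_pos h']; exact Nat.le_add_right 1 _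
                    · rw [if_pos h']; exact Nat.le_add_left 1 _
              _ ≤ 2 := by
                  rw [Finset.sum_add_distrib, Finset.sum_ite_eq', Finset.sum_ite_eq']
                  split <;> split <;> omega
      _ = 2 * ∑ t ∈ Finset.Icc 2 T, (if idx t = idx (t-1) then 0 else 1) :=
          (Finset.mul_sum _ _ _).symm
      _ ≤ 2 * (S - 1) := Nat.mul_le_mul_left 2 hsw
  have hcardS : A.card ≤ S := by
    rw [hA]
    have := aux_card idx T (by omega)
    omega
  have hSsum : ∑ i ∈ A, (m i + 1) ≤ 3 * S := by
    rw [Finset.sum_add_distrib, Finset.sum_const, smul_eq_mul, mul_one]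
    omega
  -- Step 6: put everything together with real arithmetic
  set tg := (T : ℝ) * ((n : ℝ) * (S : ℝ) * Real.log T + (n : ℝ) ^ 2 * Real.log K)
    with htg
  have htgnn : 0 ≤ tg := by
    apply mul_nonneg (Nat.cast_nonneg T)
    apply add_nonneg
    · exact mul_nonneg (mul_nonneg (Nat.cast_nonneg n) (Nat.cast_nonneg S)) hlogT.le
    · exact mul_nonneg (by positivity) hlogK.le
  set st := Real.sqrt tg with hst
  have hstnn : 0 ≤ st := Real.sqrt_nonneg _
  have step1 : ∑ t ∈ Finset.Icc 1 T, r t (idx t)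
      ≤ (A.card : ℝ) * (C * L)
        + C * ∑ i ∈ A, Real.sqrt ((T : ℝ) * ((m i + 1 : ℕ) : ℝ) * Real.log T) := by
    rw [hdecomp]
    calc ∑ i ∈ A, ∑ t ∈ Finset.Icc 1 T, (if idx t = i then r t i else 0)
        ≤ ∑ i ∈ A, (C * L + C * Real.sqrt ((T : ℝ) * ((m i + 1 : ℕ) : ℝ) * Real.log T)) :=
          Finset.sum_le_sum fun i _ => key i
      _ = (A.card : ℝ) * (C * L)
          + C * ∑ i ∈ A, Real.sqrt ((T : ℝ) * ((m i + 1 : ℕ) : ℝ) * Real.log T) := by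
          rw [Finset.sum_add_distrib, Finset.sum_const, nsmul_eq_mul, Finset.mul_sum]
  have hTlogT : 0 ≤ (T : ℝ) * Real.log T :=
    mul_nonneg (Nat.cast_nonneg T) hlogT.le
  have step2 : ∑ i ∈ A, Real.sqrt ((T : ℝ) * ((m i + 1 : ℕ) : ℝ) * Real.log T)
      ≤ Real.sqrt ((T : ℝ) * Real.log T)
        * Real.sqrt ((A.card : ℝ) * ∑ i ∈ A, ((m i + 1 : ℕ) : ℝ)) := by
    have e : ∀ i ∈ A, Real.sqrt ((T : ℝ) * ((m i + 1 : ℕ) : ℝ) * Real.log T)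
        = Real.sqrt ((T : ℝ) * Real.log T) * Real.sqrt (((m i + 1 : ℕ) : ℝ)) := by
      intro i _
      rw [show (T : ℝ) * ((m i + 1 : ℕ) : ℝ) * Real.log T
          = ((T : ℝ) * Real.log T) * ((m i + 1 : ℕ) : ℝ) by ring,
        Real.sqrt_mul hTlogT]
    rw [Finset.sum_congr rfl e, ← Finset.mul_sum]
    exact mul_le_mul_of_nonneg_left
      (aux_sum_sqrt A _ fun i _ => Nat.cast_nonneg _) (Real.sqrt_nonneg _)
  have hsumS : (∑ i ∈ A, ((m i + 1 : ℕ) : ℝ)) ≤ 3 * (S : ℝ) := by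
    exact_mod_cast hSsum
  have hcardn : (A.card : ℝ) ≤ (n : ℝ) := by exact_mod_cast hcard
  have step3 : Real.sqrt ((A.card : ℝ) * ∑ i ∈ A, ((m i + 1 : ℕ) : ℝ))
      ≤ Real.sqrt ((n : ℝ) * (3 * (S : ℝ))) := by
    apply Real.sqrt_le_sqrt
    apply mul_le_mul hcardn hsumS
      (Finset.sum_nonneg fun i _ => Nat.cast_nonneg _) (Nat.cast_nonneg n)
  -- first piece: n C L ≤ C st
  have piece1 : (n : ℝ) * (C * L) ≤ C * st := by
    have e : (n : ℝ) * L = Real.sqrt ((n : ℝ)^2 * ((T : ℝ) * Real.log K)) := by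
      rw [Real.sqrt_mul (sq_nonneg _), Real.sqrt_sq (Nat.cast_nonneg n), hL]
    have hle : (n : ℝ)^2 * ((T : ℝ) * Real.log K) ≤ tg := by
      rw [htg]
      have : 0 ≤ (T : ℝ) * ((n : ℝ) * (S : ℝ) * Real.log T) :=
        mul_nonneg (Nat.cast_nonneg T)
          (mul_nonneg (mul_nonneg (Nat.cast_nonneg n) (Nat.cast_nonneg S)) hlogT.le)
      nlinarith
    calc (n : ℝ) * (C * L) = C * ((n : ℝ) * L) := by ring
      _ ≤ C * st := by
        apply mul_le_mul_of_nonneg_left _ hC.le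
        rw [e, hst]
        exact Real.sqrt_le_sqrt hle
  -- second piece
  have piece2 : Real.sqrt ((T : ℝ) * Real.log T) * Real.sqrt ((n : ℝ) * (3 * (S : ℝ)))
      ≤ 2 * st := by
    have e : Real.sqrt ((T : ℝ) * Real.log T) * Real.sqrt ((n : ℝ) * (3 * (S : ℝ)))
        = Real.sqrt (((T : ℝ) * Real.log T) * ((n : ℝ) * (3 * (S : ℝ)))) :=
      (Real.sqrt_mul hTlogT _).symm
    have hle : ((T : ℝ) * Real.log T) * ((n : ℝ) * (3 * (S : ℝ))) ≤ 4 * tg := by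
      rw [htg]
      have h1 : 0 ≤ (T : ℝ) * ((n : ℝ)^2 * Real.log K) :=
        mul_nonneg (Nat.cast_nonneg T) (mul_nonneg (by positivity) hlogK.le)
      have h2 : 0 ≤ (T : ℝ) * ((n : ℝ) * (S : ℝ) * Real.log T) :=
        mul_nonneg (Nat.cast_nonneg T)
          (mul_nonneg (mul_nonneg (Nat.cast_nonneg n) (Nat.cast_nonneg S)) hlogT.le)
      nlinarith
    rw [e]
    calc Real.sqrt (((T : ℝ) * Real.log T) * ((n : ℝ) * (3 * (S : ℝ))))
        ≤ Real.sqrt (4 * tg) := Real.sqrt_le_sqrt hle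
      _ = 2 * st := by
          rw [Real.sqrt_mul (by norm_num : (0:ℝ) ≤ 4), hst,
            show (4:ℝ) = 2^2 by norm_num, Real.sqrt_sq (by norm_num : (0:ℝ) ≤ 2)]
  -- combine
  have hcardL : (A.card : ℝ) * (C * L) ≤ (n : ℝ) * (C * L) :=
    mul_le_mul_of_nonneg_right hcardn (by positivity)
  have chain2 : C * ∑ i ∈ A, Real.sqrt ((T : ℝ) * ((m i + 1 : ℕ) : ℝ) * Real.log T)
      ≤ C * (2 * st) := by
    apply mul_le_mul_of_nonneg_left _ hC.le
    calc ∑ i ∈ A, Real.sqrt ((T : ℝ) * ((m i + 1 : ℕ) : ℝ) * Real.log T)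
        ≤ Real.sqrt ((T : ℝ) * Real.log T)
          * Real.sqrt ((A.card : ℝ) * ∑ i ∈ A, ((m i + 1 : ℕ) : ℝ)) := step2
      _ ≤ Real.sqrt ((T : ℝ) * Real.log T) * Real.sqrt ((n : ℝ) * (3 * (S : ℝ))) :=
          mul_le_mul_of_nonneg_left step3 (Real.sqrt_nonneg _)
      _ ≤ 2 * st := piece2
  calc ∑ t ∈ Finset.Icc 1 T, r t (idx t)
      ≤ (A.card : ℝ) * (C * L)
        + C * ∑ i ∈ A, Real.sqrt ((T : ℝ) * ((m i + 1 : ℕ) : ℝ) * Real.log T) := step1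
    _ ≤ (n : ℝ) * (C * L) + C * (2 * st) := add_le_add hcardL chain2
    _ ≤ C * st + C * (2 * st) := add_le_add_left piece1 _
    _ = 3 * C * st := by ring
end
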